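/- For u4 < u3 < u2 = b < u1 = a with a + 2b + 3u4 > 0 in the limit u3 → u2 = b: using λ2 = λ3 = 2u1 + 4u3 + 2u4 (value at u2 = u3) and λ4 = 2u1 + 6u4, and q = (3/8)σ1² - (1/2)σ2 at (a, b, b, u4), one has μ3 - μ4 = (1/2)(b - u4)(a + 2b + 3u4); in particular this is positive for c ≤ u4 < b whenever a + 2b + 3c > 0. -/

import Mathlib

noncomputable def qfun (u1 u2 u3 u4 : ℝ) : ℝ :=
  3/8 * (u1 + u2 + u3 + u4)^2
    - 1/2 * (u1*u2 + u1*u3 + u1*u4 + u2*u3 + u2*u4 + u3*u4)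

/-! Since `q = (3/8)σ₁² - (1/2)σ₂` and `∂σ₂/∂uᵢ = σ₁ - uᵢ`, every partial derivative is
`∂q/∂uᵢ = σ₁/4 + uᵢ/2`. Substituting this makes `μ₃ - μ₄` a polynomial, which factors as
`(1/2)(b - u₄)(a + 2b + 3u₄)`; for `c ≤ u₄ < b` both factors are positive. -/

section PartialDerivatives

variable (u1 u2 u3 u4 : ℝ)

theorem qfun_swap_last : qfun u1 u2 u3 u4 = qfun u1 u2 u4 u3 := by
  unfold qfun; ring

theorem hasDerivAt_qfun_fourth :
    HasDerivAt (fun y => qfun u1 u2 u3 y) ((u1 + u2 + u3 + u4) / 4 + u4 / 2) u4 := by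
  have hσ₁ := (((hasDerivAt_id' u4).const_add (u1 + u2 + u3)).pow 2).const_mul (3/8)
  have hσ₂ := (((hasDerivAt_id' u4).const_mul (u1 + u2 + u3)).add_const
    (u1*u2 + u1*u3 + u2*u3)).const_mul (1/2)
  have hq : (fun y => qfun u1 u2 u3 y)
      = fun y => 3/8 * (u1 + u2 + u3 + y)^2
          - 1/2 * ((u1 + u2 + u3) * y + (u1*u2 + u1*u3 + u2*u3)) := by
    funext y; unfold qfun; ring
  rw [hq]
  exact (hσ₁.sub hσ₂).congr_deriv (by push_cast; ring)

theorem hasDerivAt_qfun_third :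
    HasDerivAt (fun y => qfun u1 u2 y u4) ((u1 + u2 + u3 + u4) / 4 + u3 / 2) u3 := by
  simp only [qfun_swap_last u1 u2 _ u4]
  convert hasDerivAt_qfun_fourth u1 u2 u4 u3 using 2
  ring

end PartialDerivatives

/-- At u2 = u3 = b, u1 = a: μ3 - μ4 = (1/2)(b - u4)(a + 2b + 3u4), where
μ_i = (1/2)(λ_i - 2σ1)∂q/∂u_i + q with λ3 = 2a + 4b + 2u4, λ4 = 2a + 6u4;
moreover μ3 - μ4 > 0 for c ≤ u4 < b whenever a + 2b + 3c > 0. -/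
theorem mu3_sub_mu4_at_u2_eq_u3 (a b u4 : ℝ) :
    ((1/2) * ((2*a + 4*b + 2*u4) - 2*(a + b + b + u4))
        * deriv (fun y => qfun a b y u4) b + qfun a b b u4)
      - ((1/2) * ((2*a + 6*u4) - 2*(a + b + b + u4))
          * deriv (fun y => qfun a b b y) u4 + qfun a b b u4)
      = (1/2) * (b - u4) * (a + 2*b + 3*u4) ∧
    (∀ c : ℝ, a + 2*b + 3*c > 0 → c ≤ u4 → u4 < b →
      ((1/2) * ((2*a + 4*b + 2*u4) - 2*(a + b + b + u4))
          * deriv (fun y => qfun a b y u4) b + qfun a b b u4)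
        - ((1/2) * ((2*a + 6*u4) - 2*(a + b + b + u4))
            * deriv (fun y => qfun a b b y) u4 + qfun a b b u4) > 0) := by
  rw [(hasDerivAt_qfun_third a b b u4).deriv, (hasDerivAt_qfun_fourth a b b u4).deriv]
  refine ⟨by ring, fun c hc hcu hub => ?_⟩
  have hgap : 0 < b - u4 := sub_pos.mpr hub
  have hfactor : 0 < a + 2*b + 3*u4 := by linarith
  linear_combination (1/2 : ℝ) * mul_pos hgap hfactor
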